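/- Let H be the 5-dimensional complex Heisenberg Lie algebra with basis r₋₂, r₋₁, r₀, r₁, r₂ and brackets [r₋₁, r₁] = r₀, [r₂, r₋₂] = r₀, and [r_i, r_j] = 0 whenever i + j ≠ 0, and let w = H ⊕ sl₂(ℂ[X]) be the direct sum of Lie algebras, where sl₂(ℂ[X]) is the Lie algebra of 2×2 trace-zero matrices over ℂ[X] with y = E₁₂, z = E₂₁, h = E₁₁ − E₂₂. Set X₁ = r₁ − (1/2)y + (1/2)X·z, X₂ = r₋₁ + z, X₃ = r₋₂, and A(u) = X₁ + (u/3)·X₂ + (u²/6)·X₃ for u ∈ ℂ. Let we^2 = span_ℂ{r₋₂, r₋₁, z, 2r₀ + h}, let we^3 be the Lie subalgebra of w generated by we^2 together with all brackets [x, A(u)] (x ∈ we^2, u ∈ ℂ), and let we^4 be the Lie subalgebra generated by we^3 together with all [x, A(u)] (x ∈ we^3, u ∈ ℂ). Then we^3 = span_ℂ{r₋₂, r₋₁, r₀} ⊕ sl₂(ℂ[X]) and we^4 = we^3. -/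

import Mathlib

open Polynomial Matrix

attribute [local instance 100] LieRing.ofAssociativeRing

/-- Ambient associative algebra containing the Wahlquist–Estabrook algebra
`w = H ⊕ sl₂(ℂ[X])` of KdV: the 5-dimensional Heisenberg algebra `H` is
realized inside `4×4` strictly upper-triangular complex matrices
(`r₋₁ = E₁₂, r₁ = E₂₄, r₂ = E₁₃, r₋₂ = E₃₄, r₀ = E₁₄`, so that
`[r₋₁,r₁] = [r₂,r₋₂] = r₀` and all other brackets of basis elements vanish),
and `sl₂(ℂ[X])` inside `2×2` matrices over `ℂ[X]`; the two factors of the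
product commute, and the bracket is the componentwise commutator. -/
abbrev WEAmb := Matrix (Fin 4) (Fin 4) ℂ × Matrix (Fin 2) (Fin 2) ℂ[X]

noncomputable def rHeis : ℤ → WEAmb
  | -1 => (Matrix.single 0 1 1, 0)
  | 1 => (Matrix.single 1 3 1, 0)
  | 2 => (Matrix.single 0 2 1, 0)
  | -2 => (Matrix.single 2 3 1, 0)
  | 0 => (Matrix.single 0 3 1, 0)
  | _ => 0

noncomputable def yE : WEAmb := (0, Matrix.single 0 1 1)
noncomputable def zE : WEAmb := (0, Matrix.single 1 0 1)
noncomputable def hE : WEAmb :=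
  (0, Matrix.single 0 0 1 - Matrix.single 1 1 1)
/-- `X·z`, the element `λ z` of `sl₂(ℂ[X])`. -/
noncomputable def zXE : WEAmb := (0, (X : ℂ[X]) • Matrix.single 1 0 1)

/-- `X₁ = r₁ − (1/2)y + (1/2)X·z`. -/
noncomputable def X₁E : WEAmb := rHeis 1 - (2⁻¹ : ℂ) • yE + (2⁻¹ : ℂ) • zXE
/-- `X₂ = r₋₁ + z`. -/
noncomputable def X₂E : WEAmb := rHeis (-1) + zE
/-- `X₃ = r₋₂`. -/
noncomputable def X₃E : WEAmb := rHeis (-2)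

/-- `A(u) = X₁ + (u/3)X₂ + (u²/6)X₃`, the `x`-part of the universal
zero-curvature representation of KdV. -/
noncomputable def AKdV (u : ℂ) : WEAmb := X₁E + (u / 3) • X₂E + (u ^ 2 / 6) • X₃E

/-!
The candidate `S = span{r₋₂, r₋₁, r₀} ⊕ sl₂(ℂ[X])` is a Lie subalgebra (the three Heisenberg
elements commute, and commutators are traceless) which contains `we²` and is stable under
`ad A(u)`: the only nonzero bracket of `r₋₂, r₋₁, r₀` with `A(u)` is `[r₋₁, r₁] = r₀`. Hence
`we³ ⊆ S`.

Conversely `r₀ = [r₋₁, A(0)]`, so `h ∈ we³`, and `[2r₀ + h, A(0)] = -(y + Xz)`, whose two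
`ad h`-eigencomponents give `y, Xz ∈ we³`. Starting from `y, z, Xz`, the brackets
`[y, Xⁿz] = Xⁿh`, `[Xⁿh, Xz] = -2Xⁿ⁺¹z` and `[Xⁿh, y] = 2Xⁿy` produce all of `sl₂(ℂ[X])`.
So `we³ = S`, and since `S` is stable under `ad A(u)`, also `we⁴ = we³`.
-/

theorem LieSubalgebra.lieSpan_union_lie_le {R L ι : Type*} [CommRing R] [LieRing L]
    [LieAlgebra R L] {G : Set L} {a : ι → L} {K : LieSubalgebra R L} (hG : G ⊆ K)
    (ha : ∀ x ∈ K, ∀ i, ⁅x, a i⁆ ∈ K) :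
    lieSpan R L (G ∪ {b | ∃ x ∈ G, ∃ i, b = ⁅x, a i⁆}) ≤ K :=
  lieSpan_le.mpr <| Set.union_subset hG <| by
    rintro _ ⟨x, hx, i, rfl⟩
    exact ha x (hG hx) i

theorem Polynomial.apply_mem_of_forall_X_pow_mem {R M : Type*} [CommSemiring R]
    [AddCommMonoid M] [Module R M] {S : Submodule R M} (f : R[X] →ₗ[R] M)
    (h : ∀ n, f (X ^ n) ∈ S) (p : R[X]) : f p ∈ S := by
  have hspan : Submodule.span R (Set.range (basisMonomials R)) ≤ S.comap f := by
    rw [Submodule.span_le]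
    rintro _ ⟨n, rfl⟩
    simpa [coe_basisMonomials, monomial_one_right_eq_X_pow] using h n
  exact hspan ((basisMonomials R).span_eq ▸ Submodule.mem_top)

namespace Matrix

theorem trace_lie {n R : Type*} [Fintype n] [CommRing R] (P Q : Matrix n n R) :
    trace ⁅P, Q⁆ = 0 := by
  rw [Ring.lie_def, trace_sub, trace_mul_comm, sub_self]

section SlTwo

variable {R : Type*} [CommRing R]

def slTwoH (p : R) : Matrix (Fin 2) (Fin 2) R := single 0 0 p - single 1 1 p

theorem lie_single_zero_one_single_one_zero (p q : R) :
    ⁅(single 0 1 p : Matrix (Fin 2) (Fin 2) R), single 1 0 q⁆ = slTwoH (p * q) := by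
  simp [slTwoH, Ring.lie_def, mul_comm q]

theorem lie_slTwoH_single_zero_one (p q : R) :
    ⁅slTwoH p, (single 0 1 q : Matrix (Fin 2) (Fin 2) R)⁆ = single 0 1 (2 * p * q) := by
  ext i j; fin_cases i <;> fin_cases j <;> simp [slTwoH, Ring.lie_def, sub_mul, mul_sub]
  ring

theorem lie_slTwoH_single_one_zero (p q : R) :
    ⁅slTwoH p, (single 1 0 q : Matrix (Fin 2) (Fin 2) R)⁆ = -single 1 0 (2 * p * q) := by
  ext i j; fin_cases i <;> fin_cases j <;> simp [slTwoH, Ring.lie_def, sub_mul, mul_sub]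
  ring

theorem eq_slTwoH_add_of_trace_eq_zero {P : Matrix (Fin 2) (Fin 2) R} (h : P.trace = 0) :
    P = slTwoH (P 0 0) + single 0 1 (P 0 1) + single 1 0 (P 1 0) := by
  rw [trace_fin_two, add_eq_zero_iff_eq_neg'] at h
  ext i j; fin_cases i <;> fin_cases j <;> simp [slTwoH, h]

end SlTwo

end Matrix

namespace LieSubalgebra

open Matrix

variable {K : Type*} [Field K] [NeZero (2 : K)]
  (L : LieSubalgebra K (Matrix (Fin 2) (Fin 2) K[X]))

theorem single_mem_of_two_mul_mem {i j : Fin 2} {p : K[X]} (h : single i j (2 * p) ∈ L) :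
    single i j p ∈ L := by
  rw [← L.mem_toSubmodule, ← Submodule.smul_mem_iff _ (two_ne_zero (α := K))]
  simpa [smul_single, two_smul, two_mul, single_add] using h

theorem single_mem_of_slTwoH_mem_of_add_mem {p q : K[X]} (hh : slTwoH 1 ∈ L)
    (hv : single 0 1 p + single 1 0 q ∈ L) : single 0 1 p ∈ L ∧ single 1 0 q ∈ L := by
  have hd : single 0 1 p - single 1 0 q ∈ L := by
    rw [← L.mem_toSubmodule, ← Submodule.smul_mem_iff _ (two_ne_zero (α := K))]
    have := L.lie_mem hh hv
    rw [lie_add, lie_slTwoH_single_zero_one, lie_slTwoH_single_one_zero] at this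
    simpa [smul_sub, smul_single, two_smul, two_mul, single_add, sub_eq_add_neg,
      add_add_add_comm] using this
  constructor
  · apply L.single_mem_of_two_mul_mem
    simpa [two_mul, single_add] using add_mem hv hd
  · apply L.single_mem_of_two_mul_mem
    simpa [two_mul, single_add] using sub_mem hv hd

theorem mem_of_trace_eq_zero (hy : single 0 1 1 ∈ L) (hz : single 1 0 1 ∈ L)
    (hXz : single 1 0 X ∈ L) {P : Matrix (Fin 2) (Fin 2) K[X]} (hP : P.trace = 0) : P ∈ L := by
  have hh : ∀ {p : K[X]}, single 1 0 p ∈ L → slTwoH p ∈ L := fun h => by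
    simpa [lie_single_zero_one_single_one_zero] using L.lie_mem hy h
  have hZ : ∀ n, single 1 0 ((X : K[X]) ^ n) ∈ L := by
    intro n
    induction n with
    | zero => simpa using hz
    | succ n ih =>
      have := L.lie_mem (hh ih) hXz
      rw [lie_slTwoH_single_one_zero, neg_mem_iff, mul_assoc, ← pow_succ] at this
      exact L.single_mem_of_two_mul_mem this
  have hY : ∀ n, single 0 1 ((X : K[X]) ^ n) ∈ L := fun n => by
    have := L.lie_mem (hh (hZ n)) hy
    rw [lie_slTwoH_single_zero_one, mul_one] at this
    exact L.single_mem_of_two_mul_mem this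
  rw [eq_slTwoH_add_of_trace_eq_zero hP]
  refine add_mem (add_mem ?_ ?_) ?_
  · exact Polynomial.apply_mem_of_forall_X_pow_mem (S := L.toSubmodule)
      (singleLinearMap K 0 0 - singleLinearMap K 1 1) (fun n => hh (hZ n)) _
  · exact Polynomial.apply_mem_of_forall_X_pow_mem (S := L.toSubmodule)
      (singleLinearMap K 0 1) hY _
  · exact Polynomial.apply_mem_of_forall_X_pow_mem (S := L.toSubmodule)
      (singleLinearMap K 1 0) hZ _

end LieSubalgebra

/-- `span{r₋₂, r₋₁, r₀}` in the matrix model of `H`. -/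
noncomputable def heisNonpos : LieSubalgebra ℂ (Matrix (Fin 4) (Fin 4) ℂ) :=
  LieSubalgebra.lieSpan ℂ _ {single 2 3 1, single 0 1 1, single 0 3 1}

theorem heisNonpos_toSubmodule :
    heisNonpos.toSubmodule = Submodule.span ℂ {single 2 3 1, single 0 1 1, single 0 3 1} :=
  LieSubalgebra.coe_lieSpan_eq_span_of_forall_lie_eq_zero (by simp [Ring.lie_def])

theorem lie_single_one_three_mem_heisNonpos {x : Matrix (Fin 4) (Fin 4) ℂ}
    (hx : x ∈ heisNonpos) : ⁅x, single 1 3 1⁆ ∈ heisNonpos := by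
  rw [← LieSubalgebra.mem_toSubmodule, heisNonpos_toSubmodule] at hx ⊢
  induction hx using Submodule.span_induction with
  | mem x hx =>
    rcases hx with rfl | rfl | rfl
    · simp [Ring.lie_def]
    · simpa [Ring.lie_def] using Submodule.subset_span (by simp)
    · simp [Ring.lie_def]
  | zero => simp
  | add x y _ _ hx hy => rw [add_lie]; exact add_mem hx hy
  | smul c x _ hx => rw [smul_lie]; exact Submodule.smul_mem _ c hx

noncomputable def weStable : LieSubalgebra ℂ WEAmb :=
  { heisNonpos.toSubmodule.prod (LinearMap.ker (traceLinearMap (Fin 2) ℂ ℂ[X])) with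
    lie_mem' := fun {x y} hx hy => ⟨heisNonpos.lie_mem hx.1 hy.1, trace_lie x.2 y.2⟩ }

theorem mem_weStable {x : WEAmb} : x ∈ weStable ↔ x.1 ∈ heisNonpos ∧ x.2.trace = 0 := Iff.rfl

theorem weStable_toSubmodule :
    weStable.toSubmodule = Submodule.span ℂ {rHeis (-2), rHeis (-1), rHeis 0}
      ⊔ Submodule.map (LinearMap.inr ℂ (Matrix (Fin 4) (Fin 4) ℂ) (Matrix (Fin 2) (Fin 2) ℂ[X]))
        (LinearMap.ker (traceLinearMap (Fin 2) ℂ ℂ[X])) := by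
  have himage : ({rHeis (-2), rHeis (-1), rHeis 0} : Set WEAmb) =
      LinearMap.inl ℂ _ _ '' {single 2 3 1, single 0 1 1, single 0 3 1} := by
    simp [Set.image_insert_eq, rHeis]
  rw [himage, Submodule.span_image, ← heisNonpos_toSubmodule]
  exact LinearMap.prod_eq_sup_map _ _

theorem AKdV_fst (u : ℂ) :
    (AKdV u).1 = single 1 3 1 + ((u / 3) • single 0 1 1 + (u ^ 2 / 6) • single 2 3 1) := by
  simp [AKdV, X₁E, X₂E, X₃E, rHeis, yE, zXE, zE, add_assoc]

theorem lie_AKdV_mem_weStable {x : WEAmb} (hx : x ∈ weStable) (u : ℂ) :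
    ⁅x, AKdV u⁆ ∈ weStable := by
  refine ⟨?_, trace_lie x.2 (AKdV u).2⟩
  change ⁅x.1, (AKdV u).1⁆ ∈ heisNonpos
  rw [AKdV_fst, lie_add]
  refine add_mem (lie_single_one_three_mem_heisNonpos hx.1) (heisNonpos.lie_mem hx.1 ?_)
  exact add_mem (heisNonpos.smul_mem _ (LieSubalgebra.subset_lieSpan (by simp)))
    (heisNonpos.smul_mem _ (LieSubalgebra.subset_lieSpan (by simp)))

theorem generators_subset_weStable :
    ({rHeis (-2), rHeis (-1), zE, (2 : ℂ) • rHeis 0 + hE} : Set WEAmb) ⊆ weStable := by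
  rintro _ (rfl | rfl | rfl | rfl) <;> rw [SetLike.mem_coe, mem_weStable]
  · exact ⟨LieSubalgebra.subset_lieSpan (by simp [rHeis]), by simp [rHeis]⟩
  · exact ⟨LieSubalgebra.subset_lieSpan (by simp [rHeis]), by simp [rHeis]⟩
  · exact ⟨zero_mem _, by simp [zE]⟩
  · refine ⟨?_, by simp [hE, rHeis]⟩
    have hr0 : (single 0 3 1 : Matrix (Fin 4) (Fin 4) ℂ) ∈ heisNonpos :=
      LieSubalgebra.subset_lieSpan (by simp)
    simpa [hE, rHeis] using heisNonpos.smul_mem 2 hr0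

theorem lie_rHeis_neg_one_AKdV (u : ℂ) : ⁅rHeis (-1), AKdV u⁆ = rHeis 0 := by
  ext1
  · change ⁅single 0 1 1, (AKdV u).1⁆ = single 0 3 1
    simp [AKdV_fst, Ring.lie_def, mul_add, add_mul]
  · exact zero_lie _

theorem lie_two_smul_rHeis_zero_add_hE_AKdV_zero :
    ⁅(2 : ℂ) • rHeis 0 + hE, AKdV 0⁆ = -(0, single 0 1 1 + single 1 0 X) := by
  ext1
  · simp [AKdV_fst, rHeis, hE, Ring.lie_def]
  · simp [AKdV, X₁E, X₂E, X₃E, rHeis, yE, zXE, zE, hE, Ring.lie_def]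
    refine Matrix.ext fun i j => ?_
    fin_cases i <;> fin_cases j <;> simp [Matrix.mul_apply, single_apply] <;> module

theorem weStable_le {K : LieSubalgebra ℂ WEAmb}
    (hK : ∀ x ∈ ({rHeis (-2), rHeis (-1), zE, (2 : ℂ) • rHeis 0 + hE} : Set WEAmb),
      x ∈ K ∧ ⁅x, AKdV 0⁆ ∈ K) :
    weStable ≤ K := by
  obtain ⟨hrneg2, -⟩ := hK (rHeis (-2)) (by simp)
  obtain ⟨hrneg1, hr0⟩ := hK (rHeis (-1)) (by simp)
  obtain ⟨hz, -⟩ := hK zE (by simp)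
  obtain ⟨hr0h, hv⟩ := hK ((2 : ℂ) • rHeis 0 + hE) (by simp)
  rw [lie_rHeis_neg_one_AKdV] at hr0
  rw [lie_two_smul_rHeis_zero_add_hE_AKdV_zero, neg_mem_iff] at hv
  have hh : hE ∈ K := by simpa using sub_mem hr0h (K.smul_mem 2 hr0)
  let L := K.comap (LieHom.inr ℂ (Matrix (Fin 4) (Fin 4) ℂ) (Matrix (Fin 2) (Fin 2) ℂ[X]))
  obtain ⟨hy, hXz⟩ := L.single_mem_of_slTwoH_mem_of_add_mem hh hv
  have hsl : LinearMap.ker (traceLinearMap (Fin 2) ℂ ℂ[X]) ≤ L.toSubmodule :=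
    fun P hP => L.mem_of_trace_eq_zero hy hz hXz hP
  rw [← LieSubalgebra.toSubmodule_le_toSubmodule, weStable_toSubmodule]
  refine sup_le (Submodule.span_le.mpr ?_) (Submodule.map_le_iff_le_comap.mpr hsl)
  rintro _ (rfl | rfl | rfl) <;> assumption

/-- With `we² = span_ℂ{r₋₂, r₋₁, z, 2r₀ + h}`, the Lie subalgebra `we³`
generated by `we²` and all `⁅x, A(u)⁆` (`x ∈ we²`) equals
`span_ℂ{r₋₂, r₋₁, r₀} ⊕ sl₂(ℂ[X])`, and the chain stabilizes: `we⁴ = we³`. -/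
theorem stmt14 (we₂ : Set WEAmb)
    (hwe₂ : we₂ = ↑(Submodule.span ℂ
      {rHeis (-2), rHeis (-1), zE, (2 : ℂ) • rHeis 0 + hE}))
    (we₃ we₄ : LieSubalgebra ℂ WEAmb)
    (hwe₃ : we₃ = LieSubalgebra.lieSpan ℂ WEAmb
      (we₂ ∪ {a | ∃ x ∈ we₂, ∃ u : ℂ, a = ⁅x, AKdV u⁆}))
    (hwe₄ : we₄ = LieSubalgebra.lieSpan ℂ WEAmb
      ((we₃ : Set WEAmb) ∪ {a | ∃ x ∈ we₃, ∃ u : ℂ, a = ⁅x, AKdV u⁆})) :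
    we₃.toSubmodule
      = Submodule.span ℂ {rHeis (-2), rHeis (-1), rHeis 0}
        ⊔ Submodule.map (LinearMap.inr ℂ (Matrix (Fin 4) (Fin 4) ℂ)
            (Matrix (Fin 2) (Fin 2) ℂ[X]))
          (LinearMap.ker (Matrix.traceLinearMap (Fin 2) ℂ ℂ[X]))
    ∧ we₄ = we₃ := by
  have hwe₂_le : we₂ ⊆ weStable := by
    rw [hwe₂]
    exact (Submodule.span_le (p := weStable.toSubmodule)).mpr generators_subset_weStable
  have hwe₃_eq : we₃ = weStable := by
    refine le_antisymm ?_ (weStable_le fun x hx => ?_)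
    · rw [hwe₃]
      exact LieSubalgebra.lieSpan_union_lie_le hwe₂_le fun x hx u => lie_AKdV_mem_weStable hx u
    · have hx₂ : x ∈ we₂ := hwe₂ ▸ Submodule.subset_span hx
      rw [hwe₃]
      exact ⟨LieSubalgebra.subset_lieSpan (Or.inl hx₂),
        LieSubalgebra.subset_lieSpan (Or.inr ⟨x, hx₂, 0, rfl⟩)⟩
  subst hwe₃_eq hwe₄
  refine ⟨weStable_toSubmodule, le_antisymm ?_ ?_⟩
  · exact LieSubalgebra.lieSpan_union_lie_le subset_rfl fun x hx u => lie_AKdV_mem_weStable hx u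
  · exact fun x hx => LieSubalgebra.subset_lieSpan (Or.inl hx)
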